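/- arXiv:2411.02288 — 3 statements merged into one kernel-verified Lean document; each statement's English description precedes it below -/
import Mathlib

section
/- If T is a finite tree, then for every dominating set S of T, |a(S)| ≥ 2γ(T) − |S| (as integers). -/
open scoped Classical

variable {V : Type*} [Fintype V] [DecidableEq V]

/-- `S` is a dominating set of `G`: every vertex is in `S` or adjacent to a vertex of `S`. -/
def IsDomSet (G : SimpleGraph V) (S : Finset V) : Prop :=
  ∀ v : V, v ∈ S ∨ ∃ u ∈ S, G.Adj u v

/-- `S` is a minimal dominating set: it is dominating and no proper subset is dominating. -/
def MinimalDomSet (G : SimpleGraph V) (S : Finset V) : Prop :=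
  IsDomSet G S ∧ ∀ T : Finset V, T ⊂ S → ¬ IsDomSet G T

/-- `d_i(G)`: the number of dominating sets of `G` of cardinality `i`. -/
noncomputable def domCount (G : SimpleGraph V) (i : ℕ) : ℕ :=
  (Finset.univ.filter fun S : Finset V => IsDomSet G S ∧ S.card = i).card

/-- `a(S)`: the set of critical vertices of a dominating set `S`. -/
noncomputable def aSet (G : SimpleGraph V) (S : Finset V) : Finset V :=
  S.filter fun v => ¬ IsDomSet G (S.erase v)

/-- `a(G,i)`: the sum of `|a(S)|` over all dominating sets `S` of cardinality `i`. -/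
noncomputable def aTotal (G : SimpleGraph V) (i : ℕ) : ℕ :=
  ∑ S ∈ Finset.univ.filter (fun S : Finset V => IsDomSet G S ∧ S.card = i), (aSet G S).card

/-- `γ(G)`: the minimum cardinality of a dominating set. -/
noncomputable def gamma (G : SimpleGraph V) : ℕ :=
  sInf {k | ∃ S : Finset V, IsDomSet G S ∧ S.card = k}

/-- `Γ(G)`: the maximum cardinality of a minimal dominating set. -/
noncomputable def bigGamma (G : SimpleGraph V) : ℕ :=
  sSup {k | ∃ S : Finset V, MinimalDomSet G S ∧ S.card = k}

/-- The closed neighbourhood `N[v]` as a finset. -/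
noncomputable def closedNbhd (G : SimpleGraph V) (v : V) : Finset V :=
  Finset.univ.filter fun u => u = v ∨ G.Adj v u

/-- `N_1(S)`: vertices outside `S` with exactly one closed neighbour in `S`. -/
noncomputable def N1Set (G : SimpleGraph V) (S : Finset V) : Finset V :=
  Finset.univ.filter fun v => v ∉ S ∧ (closedNbhd G v ∩ S).card = 1

/-- `N_2(S)`: vertices outside `S` with at least two closed neighbours in `S`. -/
noncomputable def N2Set (G : SimpleGraph V) (S : Finset V) : Finset V :=
  Finset.univ.filter fun v => v ∉ S ∧ 2 ≤ (closedNbhd G v ∩ S).card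

/-- `a_1(S)`: critical vertices whose closed neighbourhood meets `N_1(S)`. -/
noncomputable def a1Set (G : SimpleGraph V) (S : Finset V) : Finset V :=
  (aSet G S).filter fun v => (closedNbhd G v ∩ N1Set G S).Nonempty

/-- `a_2(S)`: critical vertices whose closed neighbourhood misses `N_1(S)`. -/
noncomputable def a2Set (G : SimpleGraph V) (S : Finset V) : Finset V :=
  (aSet G S).filter fun v => closedNbhd G v ∩ N1Set G S = ∅

/-- In the tree `G` rooted at `r`, `x` is a descendant of `y`:
`y` lies on the unique path from `x` to the root `r`. -/
def Descendant (G : SimpleGraph V) (r x y : V) : Prop :=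
  G.dist x r = G.dist x y + G.dist y r

/-- `x` is a child of `y` in `G` rooted at `r`. -/
def IsChild (G : SimpleGraph V) (r x y : V) : Prop :=
  Descendant G r x y ∧ G.dist y x = 1

/-- `p` is the parent of `x` in `G` rooted at `r`. -/
def IsParent (G : SimpleGraph V) (r p x : V) : Prop :=
  IsChild G r x p

/-- `x` is a grandchild of `y` in `G` rooted at `r`. -/
def IsGrandchild (G : SimpleGraph V) (r x y : V) : Prop :=
  Descendant G r x y ∧ G.dist y x = 2


section Helpers
open SimpleGraph


lemma dist_of_mem_support_le {G : SimpleGraph V} {x r w : V} {p : G.Walk x r}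
    (hw : w ∈ p.support) : G.dist w r ≤ p.length :=
  le_trans (dist_le _) (Walk.length_dropUntil_le p hw)

lemma tree_unique_parent {G : SimpleGraph V} (hT : G.IsTree) {r z x y : V}
    (hx : G.Adj z x) (hy : G.Adj z y) (hdx : G.dist x r < G.dist z r)
    (hdy : G.dist y r < G.dist z r) : x = y := by
  obtain ⟨p, hp, hpl⟩ := hT.isConnected.exists_path_of_dist x r
  obtain ⟨q, hq, hql⟩ := hT.isConnected.exists_path_of_dist y r
  have hzp : z ∉ p.support := fun h => absurd (dist_of_mem_support_le h) (by omega)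
  have hzq : z ∉ q.support := fun h => absurd (dist_of_mem_support_le h) (by omega)
  have h1 : (Walk.cons hx p).IsPath := hp.cons hzp
  have h2 : (Walk.cons hy q).IsPath := hq.cons hzq
  have := (hT.existsUnique_path z r).unique h1 h2
  have hsup := congrArg Walk.support this
  rw [Walk.support_cons, Walk.support_cons, p.support_eq_cons, q.support_eq_cons] at hsup
  simp only [List.cons.injEq] at hsup
  exact hsup.2.1

lemma tree_adj_dist_ne {G : SimpleGraph V} (hT : G.IsTree) {r z x : V}
    (hx : G.Adj z x) : G.dist x r ≠ G.dist z r := by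
  intro heq
  obtain ⟨p, hp, hpl⟩ := hT.isConnected.exists_path_of_dist x r
  have hzp : z ∉ p.support := by
    intro h
    have hsplit : (p.takeUntil z h).length + (p.dropUntil z h).length = p.length := by
      have h0 := congrArg Walk.length (Walk.take_spec p h); rwa [Walk.length_append] at h0

    have htpos : 0 < (p.takeUntil z h).length := by
      rcases Nat.eq_zero_or_pos (p.takeUntil z h).length with h0 | h0
      · exact absurd (Walk.eq_of_length_eq_zero h0) (fun hxz => G.irrefl (hxz ▸ hx : G.Adj z z))
      · exact h0
    have := dist_le (p.dropUntil z h)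
    omega
  have h1 : (Walk.cons hx p).IsPath := hp.cons hzp
  obtain ⟨q, hq, hql⟩ := hT.isConnected.exists_path_of_dist z r
  have := (hT.existsUnique_path z r).unique h1 hq
  have := congrArg Walk.length this
  rw [Walk.length_cons] at this
  omega

lemma tree_adj_dist_cases {G : SimpleGraph V} (hT : G.IsTree) {r z x : V}
    (hx : G.Adj z x) : G.dist x r = G.dist z r + 1 ∨ G.dist z r = G.dist x r + 1 := by
  have h1 : G.dist x r ≤ G.dist x z + G.dist z r := hT.isConnected.dist_triangle
  have h2 : G.dist z r ≤ G.dist z x + G.dist x r := hT.isConnected.dist_triangle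
  have hxz : G.dist x z = 1 := dist_eq_one_iff_adj.mpr hx.symm
  have hzx : G.dist z x = 1 := dist_eq_one_iff_adj.mpr hx
  have := tree_adj_dist_ne (r := r) hT hx
  omega


lemma isDomSet_mono {G : SimpleGraph V} {T T' : Finset V} (h : T ⊆ T')
    (hd : IsDomSet G T) : IsDomSet G T' := by
  intro v
  rcases hd v with hv | ⟨u, hu, hadj⟩
  · exact Or.inl (h hv)
  · exact Or.inr ⟨u, h hu, hadj⟩

lemma aSet_subset {G : SimpleGraph V} {S : Finset V} : aSet G S ⊆ S :=
  Finset.filter_subset _ _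

lemma domSet_erase_of_noncrit {G : SimpleGraph V} {S : Finset V} {v : V}
    (hv : v ∈ S \ aSet G S) : IsDomSet G (S.erase v) := by
  rw [Finset.mem_sdiff, aSet, Finset.mem_filter] at hv
  by_contra h
  exact hv.2 ⟨hv.1, h⟩

lemma mem_aSet_erase {G : SimpleGraph V} {S : Finset V} {v u : V} (hne : u ≠ v)
    (hu : u ∈ aSet G S) : u ∈ aSet G (S.erase v) := by
  rw [aSet, Finset.mem_filter] at hu ⊢
  refine ⟨Finset.mem_erase.mpr ⟨hne, hu.1⟩, fun hdom => hu.2 ?_⟩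
  exact isDomSet_mono (fun x hx => by
    rw [Finset.mem_erase] at hx ⊢
    exact ⟨hx.1, (Finset.mem_erase.mp hx.2).2⟩) hdom

lemma crit_witness {G : SimpleGraph V} {S : Finset V} {v u : V}
    (hv : v ∈ S \ aSet G S) (hu : u ∈ (S \ aSet G S).erase v)
    (hcrit : u ∈ aSet G (S.erase v)) :
    ∃ w, (w = u ∨ G.Adj u w) ∧ (w = v ∨ G.Adj v w) ∧
      ∀ s ∈ S, (s = w ∨ G.Adj s w) → s = u ∨ s = v := by
  obtain ⟨hune, hub⟩ := Finset.mem_erase.mp hu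
  have huS : u ∈ S := (Finset.mem_sdiff.mp hub).1
  have hvS : v ∈ S := (Finset.mem_sdiff.mp hv).1
  have hSv : IsDomSet G (S.erase v) := domSet_erase_of_noncrit hv
  have hSu : IsDomSet G (S.erase u) := domSet_erase_of_noncrit hub
  rw [aSet, Finset.mem_filter] at hcrit
  obtain ⟨-, hnd⟩ := hcrit
  rw [IsDomSet] at hnd
  push_neg at hnd
  obtain ⟨w, hw1, hw2⟩ := hnd
  -- third condition
  have h3 : ∀ s ∈ S, (s = w ∨ G.Adj s w) → s = u ∨ s = v := by
    intro s hsS hdom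
    by_contra hcon
    push_neg at hcon
    have hsmem : s ∈ ((S.erase v).erase u) :=
      Finset.mem_erase.mpr ⟨hcon.1, Finset.mem_erase.mpr ⟨hcon.2, hsS⟩⟩
    rcases hdom with rfl | hadj
    · exact hw1 hsmem
    · exact hw2 s hsmem hadj
  refine ⟨w, ?_, ?_, h3⟩
  · rcases hSv w with hwm | ⟨s, hsm, hadj⟩
    · left
      by_contra hne
      exact hw1 (Finset.mem_erase.mpr ⟨fun h => hne h, hwm⟩)
    · right
      have hsS : s ∈ S := Finset.mem_of_mem_erase hsm
      have := h3 s hsS (Or.inr hadj)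
      rcases this with rfl | rfl
      · exact hadj
      · exact absurd rfl (Finset.mem_erase.mp hsm).1
  · rcases hSu w with hwm | ⟨s, hsm, hadj⟩
    · have hwS : w ∈ S := Finset.mem_of_mem_erase hwm
      have := h3 w hwS (Or.inl rfl)
      rcases this with rfl | rfl
      · exact absurd rfl (Finset.mem_erase.mp hwm).1
      · exact Or.inl rfl
    · have hsS : s ∈ S := Finset.mem_of_mem_erase hsm
      have := h3 s hsS (Or.inr hadj)
      rcases this with rfl | rfl
      · exact absurd rfl (Finset.mem_erase.mp hsm).1
      · exact Or.inr hadj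

lemma newly_crit_unique {G : SimpleGraph V} (hT : G.IsTree) {S : Finset V}
    {r v : V} (hv : v ∈ S \ aSet G S)
    (hmax : ∀ u ∈ S \ aSet G S, G.dist u r ≤ G.dist v r)
    {u1 u2 : V}
    (h1 : u1 ∈ ((S \ aSet G S).erase v) ∩ aSet G (S.erase v))
    (h2 : u2 ∈ ((S \ aSet G S).erase v) ∩ aSet G (S.erase v)) :
    u1 = u2 := by
  by_contra hne
  obtain ⟨h1e, h1c⟩ := Finset.mem_inter.mp h1
  obtain ⟨h2e, h2c⟩ := Finset.mem_inter.mp h2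
  obtain ⟨w1, hw1u, hw1v, hN1⟩ := crit_witness hv h1e h1c
  obtain ⟨w2, hw2u, hw2v, hN2⟩ := crit_witness hv h2e h2c
  have hu1ne : u1 ≠ v := (Finset.mem_erase.mp h1e).1
  have hu2ne : u2 ≠ v := (Finset.mem_erase.mp h2e).1
  have hu1S : u1 ∈ S := (Finset.mem_sdiff.mp (Finset.mem_erase.mp h1e).2).1
  have hu2S : u2 ∈ S := (Finset.mem_sdiff.mp (Finset.mem_erase.mp h2e).2).1
  have hd1 : G.dist u1 r ≤ G.dist v r := hmax u1 (Finset.mem_erase.mp h1e).2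
  have hd2 : G.dist u2 r ≤ G.dist v r := hmax u2 (Finset.mem_erase.mp h2e).2
  -- normalize each witness: key vertex adjacent to v, at smaller depth
  have process : ∀ u w, u ∈ S → u ≠ v → G.dist u r ≤ G.dist v r →
      (w = u ∨ G.Adj u w) → (w = v ∨ G.Adj v w) →
      (∀ s ∈ S, (s = w ∨ G.Adj s w) → s = u ∨ s = v) →
      ∃ z, G.Adj v z ∧ G.dist z r + 1 = G.dist v r ∧
        (z = u ∨ (z ∉ S ∧ z = w ∧ G.Adj u w)) := by
    intro u w huS hunv hud hwu hwv hN
    have hAdj : G.Adj v u ∨ (G.Adj v w ∧ G.Adj u w ∧ w ∉ S) := by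
      rcases hwv with rfl | hvw
      · rcases hwu with h | h
        · exact absurd h.symm hunv
        · exact Or.inl h.symm
      · rcases hwu with rfl | huw
        · exact Or.inl hvw
        · refine Or.inr ⟨hvw, huw, fun hwS => ?_⟩
          rcases hN w hwS (Or.inl rfl) with rfl | rfl
          · exact G.irrefl huw
          · exact G.irrefl hvw
    rcases hAdj with hvu | ⟨hvw, huw, hwS⟩
    · refine ⟨u, hvu, ?_, Or.inl rfl⟩
      rcases tree_adj_dist_cases (r := r) hT hvu with h | h
      · omega
      · omega
    · refine ⟨w, hvw, ?_, Or.inr ⟨hwS, rfl, huw⟩⟩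
      rcases tree_adj_dist_cases (r := r) hT hvw with h | h
      · -- dist w r = dist v r + 1 : impossible
        exfalso
        rcases tree_adj_dist_cases (r := r) hT huw.symm with h' | h'
        · omega
        · exact hunv (tree_unique_parent (r := r) hT huw.symm hvw.symm (by omega) (by omega))
      · omega
  obtain ⟨z1, hz1a, hz1d, hz1c⟩ := process u1 w1 hu1S hu1ne hd1 hw1u hw1v hN1
  obtain ⟨z2, hz2a, hz2d, hz2c⟩ := process u2 w2 hu2S hu2ne hd2 hw2u hw2v hN2
  have hz12 : z1 = z2 :=
    tree_unique_parent (r := r) hT hz1a hz2a (by omega) (by omega)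
  rcases hz1c with rfl | ⟨hz1S, rfl, hu1w⟩ <;> rcases hz2c with h2' | ⟨hz2S, h2w, hu2w⟩
  · exact hne (hz12.trans h2')
  · subst h2w; exact hz2S (hz12 ▸ hu1S)
  · subst h2'; exact hz1S (hz12.symm ▸ hu2S)
  · subst h2w
    rw [← hz12] at hu2w
    rcases hN1 u2 hu2S (Or.inr hu2w) with h | h
    · exact hne h.symm
    · exact hu2ne h

lemma exists_good_vertex {G : SimpleGraph V} (hT : G.IsTree) {S : Finset V}
    (hS : IsDomSet G S) (hb : (S \ aSet G S).Nonempty) :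
    ∃ v ∈ S \ aSet G S,
      (S \ aSet G S).card ≤ ((S.erase v) \ aSet G (S.erase v)).card + 2 := by
  obtain ⟨r, hr⟩ := hb
  have hb : (S \ aSet G S).Nonempty := ⟨r, hr⟩
  obtain ⟨v, hv, hmax⟩ := Finset.exists_max_image (S \ aSet G S) (fun u => G.dist u r) hb
  refine ⟨v, hv, ?_⟩
  set NC := ((S \ aSet G S).erase v) ∩ aSet G (S.erase v) with hNC
  have hNC1 : NC.card ≤ 1 :=
    Finset.card_le_one.mpr (fun a ha b hb' => newly_crit_unique hT hv hmax ha hb')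
  have hsub : ((S \ aSet G S).erase v) \ NC ⊆ (S.erase v) \ aSet G (S.erase v) := by
    intro u hu
    rw [Finset.mem_sdiff] at hu
    obtain ⟨hu1, hu2⟩ := hu
    obtain ⟨hune, hub⟩ := Finset.mem_erase.mp hu1
    rw [Finset.mem_sdiff]
    refine ⟨Finset.mem_erase.mpr ⟨hune, (Finset.mem_sdiff.mp hub).1⟩, fun hcrit => ?_⟩
    exact hu2 (Finset.mem_inter.mpr ⟨hu1, hcrit⟩)
  have h1 := Finset.card_le_card hsub
  have h2 := Finset.le_card_sdiff NC ((S \ aSet G S).erase v)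
  have h3 : ((S \ aSet G S).erase v).card = (S \ aSet G S).card - 1 :=
    Finset.card_erase_of_mem hv
  have h4 : 1 ≤ (S \ aSet G S).card := Finset.card_pos.mpr ⟨r, hr⟩
  omega

lemma exists_small_domset {G : SimpleGraph V} (hT : G.IsTree) :
    ∀ n : ℕ, ∀ S : Finset V, IsDomSet G S → (S \ aSet G S).card ≤ n →
      ∃ D : Finset V, IsDomSet G D ∧ 2 * D.card ≤ S.card + (aSet G S).card := by
  intro n
  induction n with
  | zero =>
    intro S hS h0
    have hempty : S \ aSet G S = ∅ := Finset.card_eq_zero.mp (Nat.le_zero.mp h0)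
    have hsub : S ⊆ aSet G S := Finset.sdiff_eq_empty_iff_subset.mp hempty
    exact ⟨S, hS, by have := Finset.card_le_card hsub; omega⟩
  | succ n ih =>
    intro S hS hcard
    rcases (S \ aSet G S).eq_empty_or_nonempty with hempty | hb
    · have hsub : S ⊆ aSet G S := Finset.sdiff_eq_empty_iff_subset.mp hempty
      exact ⟨S, hS, by have := Finset.card_le_card hsub; omega⟩
    · obtain ⟨v, hv, hkey⟩ := exists_good_vertex hT hS hb
      have hS' : IsDomSet G (S.erase v) := domSet_erase_of_noncrit hv
      have hb' : (S.erase v) \ aSet G (S.erase v) ⊆ (S \ aSet G S).erase v := by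
        intro u hu
        rw [Finset.mem_sdiff] at hu
        obtain ⟨hu1, hu2⟩ := hu
        obtain ⟨hune, huS⟩ := Finset.mem_erase.mp hu1
        refine Finset.mem_erase.mpr ⟨hune, Finset.mem_sdiff.mpr ⟨huS, fun hcrit => ?_⟩⟩
        exact hu2 (mem_aSet_erase hune hcrit)
      have hcard' : ((S.erase v) \ aSet G (S.erase v)).card ≤ n := by
        have := Finset.card_le_card hb'
        have h3 : ((S \ aSet G S).erase v).card = (S \ aSet G S).card - 1 :=
          Finset.card_erase_of_mem hv
        have h4 : 1 ≤ (S \ aSet G S).card := Finset.card_pos.mpr hb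
        omega
      obtain ⟨D, hD, hDle⟩ := ih (S.erase v) hS' hcard'
      refine ⟨D, hD, ?_⟩
      have e1 : (S \ aSet G S).card + (aSet G S).card = S.card :=
        Finset.card_sdiff_add_card_eq_card aSet_subset
      have e2 : ((S.erase v) \ aSet G (S.erase v)).card + (aSet G (S.erase v)).card
          = (S.erase v).card :=
        Finset.card_sdiff_add_card_eq_card aSet_subset
      have e3 : (S.erase v).card = S.card - 1 :=
        Finset.card_erase_of_mem (Finset.mem_sdiff.mp hv).1
      have e4 : 1 ≤ S.card := Finset.card_pos.mpr ⟨v, (Finset.mem_sdiff.mp hv).1⟩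
      omega

lemma gamma_le_card {G : SimpleGraph V} {D : Finset V} (hD : IsDomSet G D) :
    gamma G ≤ D.card :=
  Nat.sInf_le ⟨D, hD, rfl⟩

end Helpers

theorem aSet_card_lower_bound_of_tree (G : SimpleGraph V) (hT : G.IsTree)
    (S : Finset V) (hS : IsDomSet G S) :
    2 * (gamma G : ℤ) - (S.card : ℤ) ≤ ((aSet G S).card : ℤ) := by
  obtain ⟨D, hD, hDle⟩ :=
    exists_small_domset hT (S \ aSet G S).card S hS le_rfl
  have hg : gamma G ≤ D.card := gamma_le_card hD
  omega
end

section
/- Let T be a finite tree rooted at a vertex r, let S be a dominating set of T, let A ⊆ a_1(S) be a set all of whose vertices have the same depth in T, let N be the set of vertices of N_1(S) having a neighbour in A, and let S' = (S \ A) ∪ N. Then (i) |S'| ≥ |S|, and (ii) every vertex of A and every descendant of a vertex of A is dominated by S' (i.e., lies in S' or is adjacent to a vertex of S'). -/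
open scoped Classical

variable {V : Type*} [Fintype V] [DecidableEq V]

/-! Every vertex of `A` has a private neighbour in `N_1(S)`, which lies in `N`, so
`|A| ≤ |N|` and `A` stays dominated. A descendant `x ∉ S` of `y ∈ A` that loses its domination
was dominated only by vertices of `A`; since all of `A` lies at the depth of `y`, such a vertex is
the parent of `x`, hence equals `y`, so `x ∈ N_1(S)` is a neighbour of `y` and moves into `N`. -/

lemma Finset.card_le_card_sdiff_union {α : Type*} [DecidableEq α] {s t u : Finset α}
    (hts : t ⊆ s) (htu : t.card ≤ u.card) (hsu : Disjoint s u) :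
    s.card ≤ (s \ t ∪ u).card := by
  rw [card_union_of_disjoint (hsu.mono_left sdiff_subset), card_sdiff_of_subset hts]
  have := card_le_card hts
  omega

omit [Fintype V] [DecidableEq V] in
lemma SimpleGraph.IsAcyclic.eq_of_adj_of_dist_add_one {G : SimpleGraph V} (hG : G.IsAcyclic)
    {r x y u : V} (hy : G.Adj y x) (hu : G.Adj u x)
    (hdy : G.dist r x = G.dist r y + 1) (hdu : G.dist r x = G.dist r u + 1) : u = y := by
  have hrx : G.Reachable r x := .of_dist_ne_zero (by omega)
  obtain ⟨p, hp⟩ := (hrx.trans hy.symm.reachable).exists_walk_length_eq_dist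
  obtain ⟨q, hq⟩ := (hrx.trans hu.symm.reachable).exists_walk_length_eq_dist
  have hpq := (hG.subsingleton_path r x).elim
    ⟨p.concat hy, (p.concat hy).isPath_of_length_eq_dist (by simp [hp, hdy])⟩
    ⟨q.concat hu, (q.concat hu).isPath_of_length_eq_dist (by simp [hq, hdu])⟩
  exact (Walk.concat_inj (congrArg Subtype.val hpq)).1.symm

omit [Fintype V] [DecidableEq V] in
lemma Descendant.eq_of_adj_of_dist_eq {G : SimpleGraph V} (hT : G.IsTree) {r x y u : V}
    (hxy : Descendant G r x y) (hne : x ≠ y) (hux : G.Adj u x)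
    (hdu : G.dist r u = G.dist r y) : u = y ∧ G.Adj y x := by
  have hpos : 0 < G.dist x y := hT.connected.pos_dist_of_ne hne
  have htri : G.dist r x ≤ G.dist r u + G.dist u x := hT.connected.dist_triangle
  rw [SimpleGraph.dist_eq_one_iff_adj.2 hux] at htri
  rw [Descendant, SimpleGraph.dist_comm (u := x) (v := r),
    SimpleGraph.dist_comm (u := y) (v := r)] at hxy
  -- the depth of `x` exceeds that of `y` by `dist x y ≥ 1`, and that of `u` by at most `1`
  have hadj : G.Adj x y := SimpleGraph.dist_eq_one_iff_adj.1 (by omega)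
  exact ⟨hT.isAcyclic.eq_of_adj_of_dist_add_one (r := r) hadj.symm hux (by omega) (by omega),
    hadj.symm⟩

section Domination

variable {G : SimpleGraph V} {S A : Finset V}

def Dominated (G : SimpleGraph V) (D : Finset V) (x : V) : Prop :=
  x ∈ D ∨ ∃ u ∈ D, G.Adj u x

/-- The set `N` of the theorem. -/
noncomputable def N1AdjSet (G : SimpleGraph V) (S A : Finset V) : Finset V :=
  (N1Set G S).filter fun v => ∃ u ∈ A, G.Adj u v

lemma mem_closedNbhd {u v : V} : u ∈ closedNbhd G v ↔ u = v ∨ G.Adj v u := by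
  simp [closedNbhd]

lemma a1Set_subset : a1Set G S ⊆ S :=
  fun _ hv => (Finset.mem_filter.1 (Finset.mem_filter.1 hv).1).1

lemma notMem_of_mem_N1Set {v : V} (hv : v ∈ N1Set G S) : v ∉ S :=
  (Finset.mem_filter.1 hv).2.1

lemma eq_of_adj_of_mem_N1Set {v a b : V} (hv : v ∈ N1Set G S) (ha : a ∈ S) (hb : b ∈ S)
    (hav : G.Adj a v) (hbv : G.Adj b v) : a = b :=
  Finset.card_le_one.1 (Finset.mem_filter.1 hv).2.2.le a
    (Finset.mem_inter.2 ⟨mem_closedNbhd.2 (.inr hav.symm), ha⟩) b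
    (Finset.mem_inter.2 ⟨mem_closedNbhd.2 (.inr hbv.symm), hb⟩)

lemma mem_N1Set_of_forall_adj_eq {v a : V} (hv : v ∉ S) (ha : a ∈ S) (hav : G.Adj a v)
    (huniq : ∀ b ∈ S, G.Adj b v → b = a) : v ∈ N1Set G S := by
  refine Finset.mem_filter.2 ⟨Finset.mem_univ _, hv, Finset.card_eq_one.2 ⟨a, ?_⟩⟩
  ext b
  simp only [Finset.mem_inter, mem_closedNbhd, Finset.mem_singleton]
  constructor
  · rintro ⟨rfl | hvb, hb⟩
    exacts [absurd hb hv, huniq b hb hvb.symm]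
  · rintro rfl
    exact ⟨.inr hav.symm, ha⟩

lemma exists_adj_mem_N1Set_of_mem_a1Set {a : V} (ha : a ∈ a1Set G S) :
    ∃ v ∈ N1Set G S, G.Adj a v := by
  obtain ⟨v, hv⟩ := (Finset.mem_filter.1 ha).2
  obtain ⟨hva | hav, hvN⟩ := Finset.mem_inter.1 hv |>.imp_left mem_closedNbhd.1
  · exact absurd (hva ▸ a1Set_subset ha) (notMem_of_mem_N1Set hvN)
  · exact ⟨v, hvN, hav⟩

lemma disjoint_N1AdjSet : Disjoint S (N1AdjSet G S A) :=
  Finset.disjoint_right.2 fun _ hv => notMem_of_mem_N1Set (Finset.mem_filter.1 hv).1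

lemma exists_adj_mem_N1AdjSet (hA : A ⊆ a1Set G S) {a : V} (ha : a ∈ A) :
    ∃ v ∈ N1AdjSet G S A, G.Adj a v := by
  obtain ⟨v, hv, hav⟩ := exists_adj_mem_N1Set_of_mem_a1Set (hA ha)
  exact ⟨v, Finset.mem_filter.2 ⟨hv, a, ha, hav⟩, hav⟩

lemma card_le_card_N1AdjSet (hA : A ⊆ a1Set G S) : A.card ≤ (N1AdjSet G S A).card :=
  Finset.card_le_card_of_forall_subsingleton G.Adj (fun _ => exists_adj_mem_N1AdjSet hA)
    fun _ hv _ ha _ hb => eq_of_adj_of_mem_N1Set (Finset.mem_filter.1 hv).1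
      (a1Set_subset (hA ha.1)) (a1Set_subset (hA hb.1)) ha.2 hb.2

lemma dominated_of_mem (hA : A ⊆ a1Set G S) {a : V} (ha : a ∈ A) :
    Dominated G (S \ A ∪ N1AdjSet G S A) a := by
  obtain ⟨v, hv, hav⟩ := exists_adj_mem_N1AdjSet hA ha
  exact .inr ⟨v, Finset.mem_union_right _ hv, hav.symm⟩

lemma dominated_of_descendant (hT : G.IsTree) (hS : IsDomSet G S) (hA : A ⊆ a1Set G S)
    {r : V} (hdepth : ∀ x ∈ A, ∀ y ∈ A, G.dist r x = G.dist r y) {x y : V} (hy : y ∈ A)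
    (hxy : Descendant G r x y) (hx : x ∉ A) : Dominated G (S \ A ∪ N1AdjSet G S A) x := by
  by_cases hxS : x ∈ S
  · exact .inl (Finset.mem_union_left _ (Finset.mem_sdiff.2 ⟨hxS, hx⟩))
  by_cases hout : ∃ w ∈ S \ A, G.Adj w x
  · obtain ⟨w, hw, hwx⟩ := hout
    exact .inr ⟨w, Finset.mem_union_left _ hw, hwx⟩
  push Not at hout
  have hne : x ≠ y := by rintro rfl; exact hx hy
  have hparent : ∀ w ∈ S, G.Adj w x → w = y ∧ G.Adj y x := fun w hw hwx =>
    have hwA : w ∈ A := by_contra fun h => hout w (Finset.mem_sdiff.2 ⟨hw, h⟩) hwx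
    hxy.eq_of_adj_of_dist_eq hT hne hwx (hdepth w hwA y hy)
  obtain ⟨u, hu, hux⟩ := (hS x).resolve_left hxS
  have hyx := (hparent u hu hux).2
  refine .inl (Finset.mem_union_right _ (Finset.mem_filter.2 ⟨?_, y, hy, hyx⟩))
  exact mem_N1Set_of_forall_adj_eq hxS (a1Set_subset (hA hy)) hyx
    fun w hw hwx => (hparent w hw hwx).1

end Domination

theorem move_a1_to_n1_part_i_ii (G : SimpleGraph V) (hT : G.IsTree) (r : V)
    (S : Finset V) (hS : IsDomSet G S)
    (A : Finset V) (hA : A ⊆ a1Set G S)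
    (hdepth : ∀ x ∈ A, ∀ y ∈ A, G.dist r x = G.dist r y)
    (N S' : Finset V)
    (hN : N = (N1Set G S).filter fun v => ∃ u ∈ A, G.Adj u v)
    (hS' : S' = (S \ A) ∪ N) :
    S.card ≤ S'.card ∧
      ∀ x : V, (x ∈ A ∨ ∃ y ∈ A, Descendant G r x y) →
        (x ∈ S' ∨ ∃ u ∈ S', G.Adj u x) := by
  obtain rfl : N = N1AdjSet G S A := hN
  subst hS'
  refine ⟨Finset.card_le_card_sdiff_union (hA.trans a1Set_subset)
    (card_le_card_N1AdjSet hA) disjoint_N1AdjSet, ?_⟩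
  intro x hx
  by_cases hxA : x ∈ A
  · exact dominated_of_mem hA hxA
  obtain ⟨y, hy, hxy⟩ := hx.resolve_left hxA
  exact dominated_of_descendant hT hS hA hdepth hy hxy hxA
end

section
/- Let T be a finite tree, let M be a minimal dominating set of T, and let v ∈ a_1(M). Then there exists a minimal dominating set M' of T with |M'| ≥ |M| + |N(v) ∩ N_1(M)| − 1; in particular |M'| ≥ |M|. -/
/-!
A maximum independent set of a tree is a minimal dominating set, so it suffices to find an
independent set with at least `|W|` vertices, where `W = (M \ {v}) ∪ (N(v) ∩ N₁(M))` has
`|M| - 1 + |N(v) ∩ N₁(M)|` vertices. Root the tree at `v` and repeatedly remove a deepest vertex: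
this gives an independent set `I` and a matching `S` of edges `{x, parent x}` with
`n ≤ |I| + |S|`. Every edge of `S` is charged injectively to a vertex outside `W`: to an endpoint
outside `W` if there is one, and otherwise (both endpoints then lie in `M \ {v}`) to a private
neighbour of the lower endpoint `x` with respect to `M`, which is a child of `x`. Hence
`|S| ≤ n - |W|`, that is `|W| ≤ |I|`.
-/

open scoped Classical

variable {V : Type*} [Fintype V] [DecidableEq V]

open Finset

section

variable {α : Type*}

/-- The pairs `{x, f x}` with `x ∈ S` are pairwise disjoint; for the parent map of a rooted tree
they are the edges of a matching. -/
def IsParentMatching (f : α → α) (S : Finset α) : Prop :=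
  Set.InjOn f S ∧ ∀ x ∈ S, f x ∉ S

theorem IsParentMatching.insert [DecidableEq α] {f : α → α} {S : Finset α} {x : α}
    (hS : IsParentMatching f S) (hx : x ∉ S ∪ S.image f) (hfx : f x ∉ S ∪ S.image f)
    (hne : f x ≠ x) : IsParentMatching f (insert x S) := by
  simp only [mem_union, mem_image, not_or, not_exists, not_and] at hx hfx
  refine ⟨?_, ?_⟩
  · rw [coe_insert, Set.injOn_insert (by simpa using hx.1)]
    exact ⟨hS.1, fun ⟨y, hy, hfy⟩ => hfx.2 y hy hfy⟩
  · intro y hy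
    rw [mem_insert] at hy ⊢
    rcases hy with rfl | hy
    · exact not_or.mpr ⟨hne, hfx.1⟩
    · exact not_or.mpr ⟨fun h => hx.2 y hy h, hS.2 y hy⟩

/-- A pair `{x, f x}` not inside `W` is charged to an endpoint outside `W`; a pair inside `W` is
charged to the child `c` of `x` provided by `hW`. -/
theorem IsParentMatching.card_le_card_compl [Fintype α] [DecidableEq α] {f : α → α}
    {S W : Finset α} (hS : IsParentMatching f S)
    (hW : ∀ x ∈ W, f x ∈ W → ∃ c ∉ W, f c = x ∧ ∀ y ∈ W, f y ≠ c) : #S ≤ #Wᶜ := by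
  have hcharge : ∀ x ∈ S, ∃ c ∉ W, c = x ∨ (x ∈ W ∧ c = f x) ∨ (f c = x ∧ ∀ y ∈ W, f y ≠ c) := by
    intro x _
    by_cases hxW : x ∈ W
    · by_cases hfxW : f x ∈ W
      · obtain ⟨c, hcW, hc⟩ := hW x hxW hfxW
        exact ⟨c, hcW, .inr (.inr hc)⟩
      · exact ⟨f x, hfxW, .inr (.inl ⟨hxW, rfl⟩)⟩
    · exact ⟨x, hxW, .inl rfl⟩
  choose! g hgW hg using hcharge
  refine card_le_card_of_injOn g (fun x hx => by simpa using hgW x hx) fun x hx y hy hxy => ?_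
  have hinj := @hS.1 x hx y hy
  have hx' := hS.2 x hx
  have hy' := hS.2 y hy
  rcases hg x hx with h | h | h <;> rcases hg y hy with h' | h' | h' <;> grind

variable {G : SimpleGraph α} {r p q x y : α}

theorem isParent_iff : IsParent G r p x ↔ G.Adj p x ∧ G.dist x r = G.dist p r + 1 := by
  rw [IsParent, IsChild, Descendant, SimpleGraph.dist_eq_one_iff_adj,
    SimpleGraph.dist_comm (u := x) (v := p)]
  constructor
  · rintro ⟨hd, hadj⟩
    rw [SimpleGraph.dist_eq_one_iff_adj.mpr hadj] at hd
    exact ⟨hadj, by omega⟩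
  · rintro ⟨hadj, hd⟩
    rw [SimpleGraph.dist_eq_one_iff_adj.mpr hadj]
    exact ⟨by omega, hadj⟩

theorem IsParent.ne_root (hp : IsParent G r p x) : x ≠ r := by
  rintro rfl
  simpa using isParent_iff.mp hp

theorem MinimalDomSet.exists_private {M : Finset α} (hM : MinimalDomSet G M) {m : α}
    (hm : m ∈ M) : ∃ w, (w = m ∨ G.Adj m w) ∧ ∀ u ∈ M, (u = w ∨ G.Adj u w) → u = m := by
  classical
  have hnot := hM.2 _ (erase_ssubset hm)
  simp only [IsDomSet, not_forall, not_or, not_exists, not_and, mem_erase] at hnot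
  obtain ⟨w, hwM, hadj⟩ := hnot
  have hpriv : ∀ u ∈ M, (u = w ∨ G.Adj u w) → u = m := by
    rintro u hu (rfl | huw)
    · by_contra h; exact hwM h hu
    · by_contra h; exact hadj u ⟨h, hu⟩ huw
  refine ⟨w, ?_, hpriv⟩
  rcases hM.1 w with hw | ⟨u, hu, huw⟩
  · exact .inl (hpriv w hw (.inl rfl))
  · exact .inr (hpriv u hu (.inr huw) ▸ huw)

namespace SimpleGraph

theorem Connected.exists_isParent (hG : G.Connected) (hx : x ≠ r) : ∃ p, IsParent G r p x := by
  obtain ⟨w, hw⟩ := hG.exists_walk_length_eq_dist x r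
  cases w with
  | nil => exact absurd rfl hx
  | @cons _ p _ hadj w =>
    refine ⟨p, isParent_iff.mpr ⟨hadj.symm, le_antisymm ?_ ?_⟩⟩
    · have := hG.dist_triangle (u := x) (v := p) (w := r)
      rw [dist_eq_one_iff_adj.mpr hadj] at this
      omega
    · have := dist_le w
      rw [Walk.length_cons] at hw
      omega

/-- Through a parent `p` the walk from `x` to the root is geodesic, hence a path, so `p` is the
second vertex of the unique path from `x` to `r`. -/
theorem IsTree.isParent_unique (hT : G.IsTree) (hp : IsParent G r p x) (hq : IsParent G r q x) :
    p = q := by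
  classical
  have hsnd : ∀ p, IsParent G r p x → ∃ w : G.Walk x r, w.IsPath ∧ w.snd = p := by
    intro p hp
    obtain ⟨hadj, hd⟩ := isParent_iff.mp hp
    obtain ⟨w, hw, hlen⟩ := hT.connected.exists_path_of_dist p r
    have hx : x ∉ w.support := by
      intro hmem
      have := dist_le (w.dropUntil x hmem)
      have := w.length_dropUntil_le_length hmem
      omega
    exact ⟨.cons hadj.symm w, hw.cons hx, by simp⟩
  obtain ⟨w, hw, rfl⟩ := hsnd p hp
  obtain ⟨w', hw', rfl⟩ := hsnd q hq
  exact congrArg (fun w : G.Path x r => w.1.snd)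
    ((hT.isAcyclic.subsingleton_path x r).elim ⟨w, hw⟩ ⟨w', hw'⟩)

/-- Junk value: `r` when `x` has no parent; in particular the root is its own parent. -/
noncomputable def parent (G : SimpleGraph α) (r x : α) : α :=
  if h : ∃ p, IsParent G r p x then h.choose else r

theorem parent_root : G.parent r r = r :=
  dif_neg fun ⟨_, hp⟩ => hp.ne_root rfl

theorem isParent_parent (hG : G.Connected) (hx : x ≠ r) : IsParent G r (G.parent r x) x := by
  have h := hG.exists_isParent hx
  rw [parent, dif_pos h]
  exact h.choose_spec

theorem adj_parent (hG : G.Connected) (hx : x ≠ r) : G.Adj x (G.parent r x) :=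
  (isParent_iff.mp (isParent_parent hG hx)).1.symm

theorem IsTree.parent_eq (hT : G.IsTree) (hp : IsParent G r p x) : G.parent r x = p :=
  hT.isParent_unique (isParent_parent hT.connected hp.ne_root) hp

theorem IsTree.parent_eq_or_parent_eq_of_adj (hT : G.IsTree) (hxy : G.Adj x y) :
    G.parent r x = y ∨ G.parent r y = x := by
  rcases hT.dist_eq_dist_add_one_of_adj r hxy with hd | hd <;>
    rw [dist_comm, dist_comm (u := r)] at hd
  · exact .inl (hT.parent_eq (isParent_iff.mpr ⟨hxy.symm, hd⟩))
  · exact .inr (hT.parent_eq (isParent_iff.mpr ⟨hxy, hd⟩))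

/-- Peeling off a deepest vertex `x` of `R`: its only possible neighbour in `R` is its parent, so
`x` joins the independent set, and the edge to its parent joins the matching if that is in `R`. -/
theorem IsTree.exists_isIndepSet_isParentMatching [DecidableEq α] (hT : G.IsTree) (r : α)
    (R : Finset α) :
    ∃ I S : Finset α, I ⊆ R ∧ G.IsIndepSet (I : Set α) ∧ S ∪ S.image (G.parent r) ⊆ R ∧
      IsParentMatching (G.parent r) S ∧ #R ≤ #I + #S := by
  induction R using Finset.strongInduction with
  | H R ih =>
  rcases R.eq_empty_or_nonempty with rfl | hR
  · exact ⟨∅, ∅, by simp, by simp, by simp, by simp [IsParentMatching], by simp⟩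
  obtain ⟨x, hxR, hmax⟩ := R.exists_max_image (G.dist · r) hR
  have hleaf : ∀ y ∈ R, G.Adj x y → y = G.parent r x := by
    intro y hy hxy
    refine ((hT.parent_eq_or_parent_eq_of_adj hxy).resolve_right fun hyx => ?_).symm
    have hyr : y ≠ r := by
      rintro rfl
      rw [parent_root] at hyx
      exact hxy.ne hyx.symm
    have := (isParent_iff.mp (hyx ▸ isParent_parent hT.connected hyr)).2
    have := hmax y hy
    omega
  have hinsert : ∀ I ⊆ R.erase x, G.parent r x ∉ I → G.IsIndepSet (I : Set α) →
      G.IsIndepSet (insert x I : Finset α) := by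
    intro I hIR hpI hI
    have hx : ∀ y ∈ I, ¬G.Adj x y := fun y hy hxy => hpI <| by
      rwa [← hleaf y (mem_of_mem_erase (hIR hy)) hxy]
    rw [coe_insert, isIndepSet_iff, Set.pairwise_insert]
    exact ⟨hI, fun y hy _ => ⟨hx y hy, fun hyx => hx y hy hyx.symm⟩⟩
  by_cases hpx : G.parent r x ∈ R.erase x
  · set R' := (R.erase x).erase (G.parent r x)
    have hR' : R' ⊆ R.erase x := erase_subset _ _
    obtain ⟨I, S, hIR, hI, hSR, hS, hcard⟩ :=
      ih R' ((erase_ssubset hpx).trans (erase_ssubset hxR))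
    have hxR' : x ∉ R' := fun h => notMem_erase x R (hR' h)
    have hpxR' : G.parent r x ∉ R' := notMem_erase _ _
    refine ⟨insert x I, insert x S, insert_subset hxR (hIR.trans (hR'.trans (erase_subset _ _))),
      hinsert I (hIR.trans hR') (fun h => hpxR' (hIR h)) hI, ?_,
      hS.insert (fun h => hxR' (hSR h)) (fun h => hpxR' (hSR h)) (ne_of_mem_erase hpx), ?_⟩
    · rw [image_insert, insert_union, union_insert, insert_subset_iff, insert_subset_iff]
      exact ⟨hxR, mem_of_mem_erase hpx, hSR.trans (hR'.trans (erase_subset _ _))⟩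
    · rw [card_insert_of_notMem fun h => hxR' (hIR h),
        card_insert_of_notMem fun h => hxR' (hSR (mem_union_left _ h))]
      have : #R' + 1 = #(R.erase x) := card_erase_add_one hpx
      have := card_erase_add_one hxR
      omega
  · obtain ⟨I, S, hIR, hI, hSR, hS, hcard⟩ := ih (R.erase x) (erase_ssubset hxR)
    refine ⟨insert x I, S, insert_subset hxR (hIR.trans (erase_subset _ _)),
      hinsert I hIR (fun h => hpx (hIR h)) hI, hSR.trans (erase_subset _ _), hS, ?_⟩
    rw [card_insert_of_notMem fun h => notMem_erase x R (hIR h)]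
    have := card_erase_add_one hxR
    omega

theorem IsMaximumIndepSet.minimalDomSet [Finite α] {J : Finset α} (hJ : G.IsMaximumIndepSet J) :
    MinimalDomSet G J := by
  classical
  refine ⟨fun w => ?_, fun T hTJ hT => ?_⟩
  · by_contra! hw
    have hind : G.IsIndepSet (insert w J : Finset α) := by
      rw [coe_insert, isIndepSet_iff, Set.pairwise_insert]
      exact ⟨hJ.isIndepSet, fun u hu _ => ⟨fun h => hw.2 u hu h.symm, hw.2 u hu⟩⟩
    have := hJ.maximum _ hind
    rw [card_insert_of_notMem hw.1] at this
    omega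
  · obtain ⟨x, hxJ, hxT⟩ := exists_of_ssubset hTJ
    rcases hT x with hx | ⟨u, huT, hux⟩
    · exact hxT hx
    · exact hJ.isIndepSet (hTJ.subset huT) hxJ hux.ne hux

end SimpleGraph

end

open SimpleGraph

section

variable {G : SimpleGraph V} {M : Finset V} {v : V}

theorem eq_of_adj_of_mem_N1Set_s11 {a m m' : V} (ha : a ∈ N1Set G M) (hm : m ∈ M) (hm' : m' ∈ M)
    (h : G.Adj m a) (h' : G.Adj m' a) : m = m' := by
  simp only [N1Set, mem_filter, mem_univ, true_and] at ha
  refine card_le_one.mp ha.2.le m ?_ m' ?_ <;>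
    simp [closedNbhd, *, G.adj_comm a]

theorem mem_of_mem_a1Set (hv : v ∈ a1Set G M) : v ∈ M :=
  mem_of_mem_filter v (mem_of_mem_filter v hv)

theorem neighborFinset_inter_N1Set_nonempty (hv : v ∈ a1Set G M) :
    (G.neighborFinset v ∩ N1Set G M).Nonempty := by
  obtain ⟨u, hu⟩ := (mem_filter.mp hv).2
  simp only [mem_inter, closedNbhd, mem_filter, mem_univ, true_and] at hu
  rcases hu.1 with rfl | hvu
  · exact absurd (mem_of_mem_a1Set hv) (mem_filter.mp hu.2).2.1
  · exact ⟨u, mem_inter.mpr ⟨(mem_neighborFinset _ _ _).mpr hvu, hu.2⟩⟩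

/-- `(M \ {v}) ∪ (N(v) ∩ N₁(M))`: the vertex `v` is traded for its private neighbours. -/
noncomputable def privateExchange (G : SimpleGraph V) (M : Finset V) (v : V) : Finset V :=
  M.erase v ∪ (G.neighborFinset v ∩ N1Set G M)

theorem card_privateExchange (hvM : v ∈ M) :
    #(privateExchange G M v) + 1 = #M + #(G.neighborFinset v ∩ N1Set G M) := by
  have hdisj : Disjoint (M.erase v) (G.neighborFinset v ∩ N1Set G M) :=
    disjoint_left.mpr fun a ha ha' => by
      simp only [N1Set, mem_inter, mem_filter] at ha'
      exact ha'.2.2.1 (mem_of_mem_erase ha)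
  rw [privateExchange, card_union_of_disjoint hdisj, ← card_erase_add_one hvM]
  omega

/-- The child is a private neighbour of `x` with respect to `M`. -/
theorem exists_child_notMem_privateExchange (hT : G.IsTree) (hM : MinimalDomSet G M)
    (hvM : v ∈ M) {x : V} (hx : x ∈ privateExchange G M v)
    (hpx : G.parent v x ∈ privateExchange G M v) :
    ∃ c ∉ privateExchange G M v, G.parent v c = x ∧
      ∀ y ∈ privateExchange G M v, G.parent v y ≠ c := by
  set A := G.neighborFinset v ∩ N1Set G M
  have hA : ∀ a ∈ A, a ∉ M ∧ ∀ m ∈ M, G.Adj m a → m = v := by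
    intro a ha
    rw [mem_inter, mem_neighborFinset] at ha
    exact ⟨(mem_filter.mp ha.2).2.1, fun m hm hma => eq_of_adj_of_mem_N1Set_s11 ha.2 hm hvM hma ha.1⟩
  have hparentA : ∀ a ∈ A, G.parent v a = v := by
    intro a ha
    have hva : G.Adj v a := (mem_neighborFinset _ _ _).mp (mem_inter.mp ha).1
    refine hT.parent_eq (isParent_iff.mpr ⟨hva, ?_⟩)
    rw [dist_self, dist_eq_one_iff_adj]
    exact hva.symm
  have hvW : v ∉ privateExchange G M v := by
    simp only [privateExchange, mem_union, mem_erase, ne_eq, not_true_eq_false, false_and, false_or]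
    exact fun hv => (hA v hv).1 hvM
  rcases mem_union.mp hx with hxM | hxA
  swap
  · exact absurd hpx (by rwa [hparentA x hxA])
  obtain ⟨hxv, hxM⟩ := mem_erase.mp hxM
  have hadj := adj_parent hT.connected hxv
  have hpM : G.parent v x ∈ M := by
    rcases mem_union.mp hpx with h | h
    · exact mem_of_mem_erase h
    · exact absurd ((hA _ h).2 x hxM hadj) hxv
  obtain ⟨c, hc, hpriv⟩ := hM.exists_private hxM
  have hxc : G.Adj x c := hc.resolve_left fun hcx =>
    hadj.ne (hpriv _ hpM (.inr (hcx ▸ hadj.symm))).symm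
  have hcM : c ∉ M := fun h => hxc.ne (hpriv c h (.inl rfl)).symm
  have hcA : c ∉ A := fun h => hxv ((hA c h).2 x hxM hxc)
  refine ⟨c, ?_, ?_, fun y hy hyc => ?_⟩
  · rw [privateExchange, mem_union, not_or]
    exact ⟨fun h => hcM (mem_of_mem_erase h), hcA⟩
  · exact (hT.parent_eq_or_parent_eq_of_adj hxc).resolve_left fun h => hcM (h ▸ hpM)
  · rcases mem_union.mp hy with hyM | hyA
    · obtain ⟨hyv, hyM⟩ := mem_erase.mp hyM
      have hyx : y = x := hpriv y hyM (.inr (hyc ▸ adj_parent hT.connected hyv))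
      exact hcM (by rwa [← hyc, hyx])
    · exact hcM (by rwa [← hyc, hparentA y hyA])

end

theorem exists_larger_minimal_dominating_set_from_a1 (G : SimpleGraph V) (hT : G.IsTree)
    (M : Finset V) (hM : MinimalDomSet G M) (v : V) (hv : v ∈ a1Set G M) :
    ∃ M' : Finset V, MinimalDomSet G M' ∧
      (M.card : ℤ) + ((G.neighborFinset v ∩ N1Set G M).card : ℤ) - 1 ≤ (M'.card : ℤ) ∧
      M.card ≤ M'.card := by
  have hvM := mem_of_mem_a1Set hv
  obtain ⟨I, S, -, hI, -, hS, hIS⟩ := hT.exists_isIndepSet_isParentMatching v univ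
  have hSW : #S ≤ #(privateExchange G M v)ᶜ := hS.card_le_card_compl fun _ hx hpx =>
    exists_child_notMem_privateExchange hT hM hvM hx hpx
  obtain ⟨J, hJ⟩ := G.maximumIndepSet_exists
  have hIJ := hJ.maximum I hI
  have hW := card_privateExchange (G := G) hvM
  have hWc := card_add_card_compl (privateExchange G M v)
  rw [← card_univ] at hWc
  have hA := (neighborFinset_inter_N1Set_nonempty hv).card_pos
  exact ⟨J, hJ.minimalDomSet, by omega, by omega⟩
end
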